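/- arXiv:2506.07638 — 8 statements merged into one kernel-verified Lean document; each statement's English description precedes it below -/
import Mathlib

section
/- For every integer i ≥ 0, the shifted modular progression (s^i_j) satisfies condition C(i). -/
/-- Condition C(i): the characterization condition for direction sequences,
with parameters `m`, `k`. -/
def CondC (m k i : ℕ) (a : ℕ → ℕ) : Prop :=
  (∀ j, i ≤ a j ∧ a j < i + k) ∧
  (Finset.image a (Finset.range k) = Finset.Ico i (i + k) ∧ ∀ j, a (j + k) = a j) ∧
  (∀ j, (a j + m < i + k → a (j + 1) = a j + m) ∧
        (i + k ≤ a j + m → a (j + 1) = a j + m - k))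

/-- The shifted modular progression `s^i_j` with parameters `m`, `k`. -/
def smp (m k : ℕ) : ℕ → ℕ → ℕ
  | 0, j => (j * m) % k
  | i + 1, j => if smp m k i j = i then smp m k i j + k else smp m k i j

lemma uniq_mod {k i a b : ℕ} (ha : i ≤ a) (ha' : a < i + k) (hb : i ≤ b)
    (hb' : b < i + k) (h : a % k = b % k) : a = b := by
  rcases le_total a b with hle | hle
  · obtain ⟨c, hc⟩ := (Nat.modEq_iff_dvd' hle).mp h
    rcases c with _ | c
    · omega
    · rw [Nat.mul_succ] at hc; omega
  · obtain ⟨c, hc⟩ := (Nat.modEq_iff_dvd' hle).mp h.symm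
    rcases c with _ | c
    · omega
    · rw [Nat.mul_succ] at hc; omega

lemma smp_spec (m k : ℕ) (hk : 0 < k) :
    ∀ i j, i ≤ smp m k i j ∧ smp m k i j < i + k ∧ smp m k i j % k = (j * m) % k := by
  intro i
  induction i with
  | zero =>
    intro j
    refine ⟨Nat.zero_le _, ?_, ?_⟩
    · simpa [smp] using Nat.mod_lt (j * m) hk
    · show (j * m) % k % k = (j * m) % k
      exact Nat.mod_mod_of_dvd _ dvd_rfl
  | succ i ih =>
    intro j
    obtain ⟨h1, h2, h3⟩ := ih j
    rw [show smp m k (i + 1) j =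
        (if smp m k i j = i then smp m k i j + k else smp m k i j) from rfl]
    split_ifs with h
    · refine ⟨by omega, by omega, ?_⟩
      rw [Nat.add_mod_right, h3]
    · exact ⟨by omega, by omega, h3⟩

theorem stmt_2 (m k : ℕ) (hm : 0 < m) (hk : 0 < k) (hmk : m < k)
    (hgcd : Nat.gcd m k = 1) (i : ℕ) :
    CondC m k i (smp m k i) := by
  obtain spec := smp_spec m k hk i
  refine ⟨fun j => ⟨(spec j).1, (spec j).2.1⟩, ⟨?_, ?_⟩, ?_⟩
  · -- image equals Ico
    have hinj : Set.InjOn (smp m k i) (Finset.range k) := by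
      intro a ha b hb hab
      simp only [Finset.coe_range, Set.mem_Iio] at ha hb
      have h1 : (a * m) % k = (b * m) % k := by
        rw [← (spec a).2.2, ← (spec b).2.2, hab]
      have hmod : a % k = b % k :=
        Nat.ModEq.cancel_right_of_coprime (by rwa [Nat.gcd_comm]) h1
      rwa [Nat.mod_eq_of_lt ha, Nat.mod_eq_of_lt hb] at hmod
    have hsub : Finset.image (smp m k i) (Finset.range k) ⊆ Finset.Ico i (i + k) := by
      intro x hx
      simp only [Finset.mem_image, Finset.mem_range] at hx
      obtain ⟨j, _, rfl⟩ := hx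
      exact Finset.mem_Ico.mpr ⟨(spec j).1, (spec j).2.1⟩
    have hcard : (Finset.image (smp m k i) (Finset.range k)).card = k := by
      rw [Finset.card_image_of_injOn hinj, Finset.card_range]
    apply Finset.eq_of_subset_of_card_le hsub
    rw [hcard, Nat.card_Ico]
    omega
  · -- periodicity
    intro j
    apply uniq_mod (spec (j + k)).1 (spec (j + k)).2.1 (spec j).1 (spec j).2.1
    rw [(spec (j + k)).2.2, (spec j).2.2]
    rw [show (j + k) * m = j * m + k * m from by ring, Nat.add_mul_mod_self_left]
  · -- recurrence
    intro j
    have h1 := (spec j).1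
    have h2 := (spec j).2.1
    have h3 := (spec j).2.2
    have hmod : (smp m k i j + m) % k = ((j + 1) * m) % k := by
      rw [show (j + 1) * m = j * m + m from by ring, Nat.add_mod (j * m) m, ← h3,
        ← Nat.add_mod]
    constructor
    · intro hlt
      exact uniq_mod (spec (j + 1)).1 (spec (j + 1)).2.1 (by omega) hlt
        (by rw [(spec (j + 1)).2.2, hmod])
    · intro hge
      have hb1 : i ≤ smp m k i j + m - k := by omega
      have hb2 : smp m k i j + m - k < i + k := by omega
      refine uniq_mod (spec (j + 1)).1 (spec (j + 1)).2.1 hb1 hb2 ?_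
      rw [(spec (j + 1)).2.2, ← hmod,
        show smp m k i j + m = (smp m k i j + m - k) + k from by omega,
        Nat.add_mod_right, Nat.add_sub_cancel]
end

section
/- For every integer i ≥ 0, the map sending j ∈ {0, 1, …, k−1} to s^i_j is a bijection from {0, 1, …, k−1} onto {i, i+1, …, i+k−1}. -/
theorem bijOn_mul_mod_Ico {m k : ℕ} (hmk : m.Coprime k) :
    Set.BijOn (fun j => j * m % k) (Set.Ico 0 k) (Set.Ico 0 k) := by
  have hmaps : Set.MapsTo (fun j => j * m % k) (Set.Ico 0 k) (Set.Ico 0 k) := fun j hj =>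
    ⟨Nat.zero_le _, Nat.mod_lt _ (Nat.zero_lt_of_lt hj.2)⟩
  refine ((Set.finite_Ico 0 k).injOn_iff_bijOn_of_mapsTo hmaps).mp fun j₁ h₁ j₂ h₂ h => ?_
  exact (Nat.ModEq.cancel_right_of_coprime hmk.symm h).eq_of_lt_of_lt h₁.2 h₂.2

theorem bijOn_ite_eq_add_Ico (i k : ℕ) :
    Set.BijOn (fun x => if x = i then x + k else x) (Set.Ico i (i + k))
      (Set.Ico (i + 1) (i + 1 + k)) := by
  refine Set.InvOn.bijOn (f' := fun y => if y = i + k then i else y) ⟨?_, ?_⟩ ?_ ?_ <;>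
    intro x hx <;> simp only [Set.mem_Ico] at hx ⊢ <;> split_ifs <;> omega

theorem smp_succ_eq_comp (m k i : ℕ) :
    smp m k (i + 1) = (fun x => if x = i then x + k else x) ∘ smp m k i :=
  rfl

theorem stmt_5_general (m k : ℕ) (hgcd : Nat.gcd m k = 1) (i : ℕ) :
    Set.BijOn (smp m k i) (Set.Ico 0 k) (Set.Ico i (i + k)) := by
  induction i with
  | zero => rw [zero_add]; exact bijOn_mul_mod_Ico hgcd
  | succ i ih => simpa only [smp_succ_eq_comp] using (bijOn_ite_eq_add_Ico i k).comp ih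

theorem stmt_5 (m k : ℕ) (hm : 0 < m) (hk : 0 < k) (hmk : m < k)
    (hgcd : Nat.gcd m k = 1) (i : ℕ) :
    Set.BijOn (smp m k i) (Set.Ico 0 k) (Set.Ico i (i + k)) :=
  stmt_5_general m k hgcd i
end

section
/- For every integer i ≥ 0, the minimal index j with s^i_j = i exists, lies in {0, 1, …, k−1}, and is equal to (i·m⁻¹) mod k, where m⁻¹ denotes the multiplicative inverse of m modulo k. -/
lemma smp_mod (m k : ℕ) (i j : ℕ) : smp m k i j % k = (j * m) % k := by
  induction i with
  | zero => simp [smp]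
  | succ i ih =>
    simp only [smp]
    split <;> simp [Nat.add_mod, ih]

lemma smp_ge (m k : ℕ) (i j : ℕ) (hk : 0 < k) : i ≤ smp m k i j := by
  induction i with
  | zero => exact Nat.zero_le _
  | succ i ih =>
    simp only [smp]
    split
    · omega
    · rename_i h; omega

lemma smp_lt (m k : ℕ) (i j : ℕ) (hk : 0 < k) : smp m k i j < i + k := by
  induction i with
  | zero => simpa [smp] using Nat.mod_lt _ hk
  | succ i ih =>
    simp only [smp]
    split <;> omega

lemma smp_eq_iff (m k : ℕ) (hk : 0 < k) (i j : ℕ) :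
    smp m k i j = i ↔ (j * m) % k = i % k := by
  constructor
  · intro h
    rw [← smp_mod m k i j, h]
  · intro h
    induction i with
    | zero =>
      simp only [smp]
      simpa using h
    | succ i ih =>
      have hge := smp_ge m k i j hk
      have hlt := smp_lt m k i j hk
      have hmod := smp_mod m k i j
      simp only [smp]
      split
      · rename_i heq
        -- smp m k i j = i, so (j*m)%k = i%k, and also = (i+1)%k, so k = 1
        have h1 : i % k = (i + 1) % k := by
          conv_lhs => rw [← heq]
          rw [hmod, h]
        have hd : k ∣ 1 := by
          have := (Nat.modEq_iff_dvd' (Nat.le_succ i)).mp h1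
          simpa using this
        have hk1 := Nat.dvd_one.mp hd
        omega
      · rename_i hne
        -- smp m k i j ≥ i+1, < i+k, ≡ i+1 mod k ⇒ = i+1
        have h2 : smp m k i j % k = (i + 1) % k := by rw [hmod, h]
        have h3 : i + 1 ≤ smp m k i j := by omega
        have h4 : k ∣ smp m k i j - (i + 1) := (Nat.modEq_iff_dvd' h3).mp h2.symm
        have h5 : smp m k i j - (i + 1) < k := by omega
        have := Nat.eq_zero_of_dvd_of_lt h4
        omega

theorem stmt_10 (m k : ℕ) (hm : 0 < m) (hk : 0 < k) (hmk : m < k)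
    (hgcd : Nat.gcd m k = 1) (minv : ℕ) (hinv : m * minv ≡ 1 [MOD k]) (i : ℕ) :
    (i * minv) % k < k ∧
    IsLeast {j : ℕ | smp m k i j = i} ((i * minv) % k) := by
  refine ⟨Nat.mod_lt _ hk, ?_, ?_⟩
  · -- membership
    show smp m k i ((i * minv) % k) = i
    rw [smp_eq_iff m k hk]
    have : (i * minv % k) * m ≡ i * minv * m [MOD k] :=
      Nat.ModEq.mul_right m (Nat.mod_modEq _ _)
    have h2 : i * minv * m ≡ i * 1 [MOD k] := by
      calc i * minv * m = i * (m * minv) := by ring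
        _ ≡ i * 1 [MOD k] := Nat.ModEq.mul_left i hinv
    have := this.trans h2
    simpa [Nat.ModEq] using this
  · intro j hj
    have hj' : (j * m) % k = i % k := (smp_eq_iff m k hk i j).mp hj
    have hc : j * m ≡ (i * minv % k) * m [MOD k] := by
      have h1 : (i * minv % k) * m ≡ i * (m * minv) [MOD k] := by
        calc (i * minv % k) * m ≡ i * minv * m [MOD k] :=
              Nat.ModEq.mul_right m (Nat.mod_modEq _ _)
          _ = i * (m * minv) := by ring
      have h2 : i * (m * minv) ≡ i * 1 [MOD k] := Nat.ModEq.mul_left i hinv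
      have h3 : (i * minv % k) * m ≡ i [MOD k] := by simpa using h1.trans h2
      have hji : j * m ≡ i [MOD k] := hj'
      exact hji.trans h3.symm
    have hcanc : j ≡ i * minv % k [MOD k] :=
      Nat.ModEq.cancel_right_of_coprime (by rwa [Nat.gcd_comm] at hgcd) hc
    have : j % k = i * minv % k % k := hcanc
    rw [Nat.mod_mod_of_dvd _ (dvd_refl k)] at this
    calc i * minv % k = j % k := this.symm
      _ ≤ j := Nat.mod_le _ _
end

section
/- For all integers j ≥ 0, s^k_j = s^0_j + k. (Consequently, in the case without offset, after placing k wedges the front direction sequence equals the base direction sequence shifted by k.) -/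
lemma smp_before (m k j : ℕ) : ∀ i, i ≤ (j * m) % k → smp m k i j = (j * m) % k := by
  intro i
  induction i with
  | zero => intro _; rfl
  | succ n ih =>
    intro h
    have hn : n ≤ (j * m) % k := Nat.le_of_succ_le h
    have := ih hn
    simp only [smp, this]
    have : ¬ (j * m) % k = n := by omega
    simp [this]

lemma smp_after (m k j : ℕ) (hk : 0 < k) : ∀ i, i ≤ k → (j * m) % k < i → smp m k i j = (j * m) % k + k := by
  intro i
  induction i with
  | zero => omega
  | succ n ih =>
    intro hik h
    rcases Nat.lt_or_ge ((j * m) % k) n with hlt | hge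
    · have := ih (by omega) hlt
      simp only [smp, this]
      have hnk : (j * m) % k < k := Nat.mod_lt _ hk
      have : ¬ (j * m) % k + k = n := by omega
      -- n < k since n + 1 ≤ k
      simp [this]
    · have hn : (j * m) % k = n := by omega
      have h2 := smp_before m k j n (le_of_eq hn.symm)
      simp [smp, h2, hn]

theorem stmt_13 (m k : ℕ) (hm : 0 < m) (hk : 0 < k) (hmk : m < k)
    (hgcd : Nat.gcd m k = 1) (j : ℕ) :
    smp m k k j = smp m k 0 j + k := by
  have h := smp_after m k j hk k le_rfl (Nat.mod_lt _ hk)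
  simpa [smp] using h
end

section
/- Let t ≥ 2 be an integer and set n = t·k. Then for every J ≥ 0, the partial sums of the unit vectors along the front and the base satisfy ∑_{j<J} exp(2πi·s^k_j/n) = exp(2πi/t) · ∑_{j<J} exp(2πi·s^0_j/n) in the complex numbers; that is, the front boundary curve is the base boundary curve rotated by 2π/t about the origin. -/
open Complex Real

lemma smp_le (m k : ℕ) (hk : 0 < k) (i j : ℕ) (hi : i ≤ k) :
    smp m k i j = if (j * m) % k < i then (j * m) % k + k else (j * m) % k := by
  induction i with
  | zero => simp [smp]
  | succ i ih =>
    have hik : i < k := hi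
    have ih' := ih (Nat.le_of_lt hik)
    set r := (j * m) % k with hr
    rw [smp, ih']
    by_cases h : r < i
    · have : r + k ≠ i := by omega
      simp [h, this, Nat.lt_succ_of_lt h]
    · by_cases h2 : r = i
      · simp [h, h2]
      · have : ¬ r < i + 1 := by omega
        simp [h, h2, this]

theorem stmt_14 (m k : ℕ) (hm : 0 < m) (hk : 0 < k) (hmk : m < k)
    (hgcd : Nat.gcd m k = 1) (t n : ℕ) (ht : 2 ≤ t) (hn : n = t * k) (J : ℕ) :
    ∑ j ∈ Finset.range J,
        Complex.exp (2 * Real.pi * Complex.I * (smp m k k j : ℂ) / (n : ℂ)) =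
      Complex.exp (2 * Real.pi * Complex.I / (t : ℂ)) *
        ∑ j ∈ Finset.range J,
          Complex.exp (2 * Real.pi * Complex.I * (smp m k 0 j : ℂ) / (n : ℂ)) := by
  rw [Finset.mul_sum]
  refine Finset.sum_congr rfl fun j _ => ?_
  have hsk : smp m k k j = (j * m) % k + k := by
    rw [smp_le m k hk k j le_rfl, if_pos (Nat.mod_lt _ hk)]
  have hs0 : smp m k 0 j = (j * m) % k := rfl
  rw [hsk, hs0, ← Complex.exp_add]
  congr 1
  have hn0 : (n : ℂ) ≠ 0 := by
    have : 0 < n := hn ▸ Nat.mul_pos (by omega) hk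
    exact_mod_cast this.ne'
  have ht0 : (t : ℂ) ≠ 0 := Nat.cast_ne_zero.mpr (by omega)
  field_simp
  push_cast [hn]
  ring
end

section
/- Let t ≥ 2 be an integer and set w = t·k − m. Then the first term of the sequence s^w equals t·k, i.e. s^w_0 = t·k. -/
lemma Nat.eq_of_dvd_of_mem_Ico {k i a b : ℕ} (ha : k ∣ a) (hb : k ∣ b)
    (ha' : a ∈ Set.Ico i (i + k)) (hb' : b ∈ Set.Ico i (i + k)) : a = b := by
  obtain ⟨c, rfl⟩ := ha
  obtain ⟨d, rfl⟩ := hb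
  simp only [Set.mem_Ico] at ha' hb'
  have hcd : c < d + 1 := Nat.lt_of_mul_lt_mul_left (a := k) (by rw [mul_add_one]; omega)
  have hdc : d < c + 1 := Nat.lt_of_mul_lt_mul_left (a := k) (by rw [mul_add_one]; omega)
  rw [show c = d by omega]

lemma smp_zero_dvd_and_mem_Ico (m : ℕ) {k : ℕ} (hk : 0 < k) (i : ℕ) :
    k ∣ smp m k i 0 ∧ smp m k i 0 ∈ Set.Ico i (i + k) := by
  induction i with
  | zero => simp [smp, hk]
  | succ i ih =>
    obtain ⟨hdvd, hlo, hhi⟩ := ih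
    by_cases h : smp m k i 0 = i
    · simp only [smp, h, if_true, Set.mem_Ico]
      exact ⟨h ▸ (Nat.dvd_add_self_right).2 hdvd, by omega, by omega⟩
    · simp only [smp, h, if_false, Set.mem_Ico]
      exact ⟨hdvd, by omega, by omega⟩

theorem stmt_15_general (m k : ℕ) (hmk : m < k) (t : ℕ) :
    smp m k (t * k - m) 0 = t * k := by
  obtain ⟨hdvd, hmem⟩ := smp_zero_dvd_and_mem_Ico m (by omega : 0 < k) (t * k - m)
  refine Nat.eq_of_dvd_of_mem_Ico hdvd (Nat.dvd_mul_left k t) hmem ?_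
  simp only [Set.mem_Ico]
  omega

theorem stmt_15 (m k : ℕ) (hm : 0 < m) (hk : 0 < k) (hmk : m < k)
    (hgcd : Nat.gcd m k = 1) (t : ℕ) (ht : 2 ≤ t) :
    smp m k (t * k - m) 0 = t * k :=
  stmt_15_general m k hmk t
end

section
/- Let t ≥ 2 be an integer and set w = t·k − m. Then for all integers j ≥ 0, s^w_j = s^0_{j+1} + w. (Consequently, in the case with offset, after placing w = n/2 wedges the front direction sequence equals the base direction sequence with its first term removed, shifted by n/2.) -/
lemma smp_invariant (m k : ℕ) (hk : 0 < k) (i j : ℕ) :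
    ∃ c, smp m k i j = (j * m) % k + k * c ∧ i ≤ smp m k i j ∧ smp m k i j < i + k := by
  induction i with
  | zero =>
    refine ⟨0, by simp [smp], Nat.zero_le _, ?_⟩
    simpa [smp] using Nat.mod_lt (j * m) hk
  | succ i ih =>
    obtain ⟨c, h1, h2, h3⟩ := ih
    by_cases h : smp m k i j = i
    · refine ⟨c + 1, ?_, ?_, ?_⟩ <;> simp only [smp, h, if_pos, if_true, Nat.mul_add,
        Nat.mul_one] <;> omega
    · refine ⟨c, ?_, ?_, ?_⟩ <;> simp only [smp, h, if_neg, if_false, ite_false] <;> omega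

theorem stmt_16 (m k : ℕ) (hm : 0 < m) (hk : 0 < k) (hmk : m < k)
    (hgcd : Nat.gcd m k = 1) (t : ℕ) (ht : 2 ≤ t) (j : ℕ) :
    smp m k (t * k - m) j = smp m k 0 (j + 1) + (t * k - m) := by
  set w := t * k - m with hw
  set a := (j * m) % k with ha
  set b := ((j + 1) * m) % k with hb
  have hbk : b < k := Nat.mod_lt _ hk
  have hmw : m ≤ t * k := le_trans hmk.le (Nat.le_mul_of_pos_left k (by omega))
  obtain ⟨c, h1, h2, h3⟩ := smp_invariant m k hk w j
  have hgoal0 : smp m k 0 (j + 1) = b := by simp [smp, hb]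
  rw [hgoal0, h1]
  -- b + w ≡ a [MOD k]
  have hab : (a + m) ≡ b [MOD k] := by
    calc a + m ≡ j * m + m [MOD k] := (Nat.mod_modEq (j * m) k).add_right m
      _ = (j + 1) * m := by ring
      _ ≡ b [MOD k] := (Nat.mod_modEq _ k).symm
  have h5 : b + w + m = b + t * k := by omega
  have h6 : (b + w) + m ≡ a + m [MOD k] := by
    calc b + w + m = b + t * k := h5
      _ ≡ b [MOD k] := by unfold Nat.ModEq; rw [Nat.add_mul_mod_self_right]
      _ ≡ a + m [MOD k] := hab.symm
  have hkey : (b + w) ≡ a [MOD k] := h6.add_right_cancel' m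
  have hx : (a + k * c) ≡ (b + w) [MOD k] := by
    calc a + k * c ≡ a [MOD k] := by unfold Nat.ModEq; rw [Nat.add_mul_mod_self_left]
      _ ≡ b + w [MOD k] := hkey.symm
  -- both a + k*c and b + w are in [w, w + k)
  have hy1 : w ≤ b + w := Nat.le_add_left _ _
  have hy2 : b + w < w + k := by omega
  rcases le_total (a + k * c) (b + w) with hle | hle
  · have hd := (Nat.modEq_iff_dvd' hle).mp hx
    have : b + w - (a + k * c) = 0 := Nat.eq_zero_of_dvd_of_lt hd (by omega) |>.symm ▸ rfl
    omega
  · have hd := (Nat.modEq_iff_dvd' hle).mp hx.symm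
    have : a + k * c - (b + w) = 0 := Nat.eq_zero_of_dvd_of_lt hd (by omega) |>.symm ▸ rfl
    omega
end

section
/- Let t ≥ 2 be an integer and let n = t·k or n = 2(t·k − m), and let (ℓ_j) for 0 ≤ j ≤ k be the lower-path direction sequence: ℓ_j = (j·m) mod k for 0 ≤ j ≤ k−1 and ℓ_k = k. Then the k+2 vertices of the lower path, i.e. the partial sums P_J = ∑_{j<J} exp(2πi·ℓ_j/n) ∈ ℂ for J = 0, 1, …, k+1, are pairwise distinct. -/
open Complex Real

theorem stmt_19 (m k : ℕ) (hm : 0 < m) (hk : 0 < k) (hmk : m < k)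
    (hgcd : Nat.gcd m k = 1) (t n : ℕ) (ht : 2 ≤ t)
    (hn : n = t * k ∨ n = 2 * (t * k - m))
    (ℓ : ℕ → ℕ) (hℓ : ∀ j < k, ℓ j = (j * m) % k) (hℓk : ℓ k = k)
    (P : ℕ → ℂ)
    (hP : ∀ J, P J = ∑ j ∈ Finset.range J,
      Complex.exp (2 * Real.pi * Complex.I * (ℓ j : ℂ) / (n : ℂ))) :
    ∀ J₁ ≤ k + 1, ∀ J₂ ≤ k + 1, P J₁ = P J₂ → J₁ = J₂ := by
  have hk2 : 2 ≤ k := by omega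
  have hn2k : 2 * k ≤ n := by
    have htk : 2 * k ≤ t * k := Nat.mul_le_mul_right k ht
    set u := t * k with hu
    rcases hn with h | h <;> omega
  have hnpos : (0:ℕ) < n := by omega
  have hnR : (0:ℝ) < (n:ℝ) := by exact_mod_cast hnpos
  have hℓle : ∀ j ≤ k, ℓ j ≤ k := by
    intro j hj
    rcases eq_or_lt_of_le hj with rfl | hj
    · simp [hℓk]
    · rw [hℓ j hj]; exact le_of_lt (Nat.mod_lt _ hk)
  have hℓpos : ∀ j, 1 ≤ j → j < k → 0 < ℓ j ∧ ℓ j < k := by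
    intro j h1 h2
    rw [hℓ j h2]
    refine ⟨?_, Nat.mod_lt _ hk⟩
    rcases Nat.eq_zero_or_pos ((j * m) % k) with h | h
    · exfalso
      have hdvd : k ∣ j * m := Nat.dvd_of_mod_eq_zero h
      have hco : Nat.Coprime k m := Nat.coprime_comm.mp hgcd
      have hkj : k ∣ j := hco.dvd_of_dvd_mul_right hdvd
      have := Nat.le_of_dvd (by omega) hkj
      omega
    · exact h
  set f : ℕ → ℂ := fun j => Complex.exp (2 * Real.pi * Complex.I * (ℓ j : ℂ) / (n : ℂ)) with hf
  have him : ∀ j, (f j).im = Real.sin (2 * Real.pi * (ℓ j : ℝ) / (n : ℝ)) := by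
    intro j
    have : 2 * Real.pi * Complex.I * (ℓ j : ℂ) / (n : ℂ)
        = ((2 * Real.pi * (ℓ j : ℝ) / (n : ℝ) : ℝ) : ℂ) * Complex.I := by
      push_cast
      ring
    rw [hf]
    simp only [this, Complex.exp_ofReal_mul_I_im]
  have key : ∀ J₁ J₂, J₁ < J₂ → J₂ ≤ k + 1 → P J₁ ≠ P J₂ := by
    intro J₁ J₂ h12 h2 heq
    have hsum : (∑ j ∈ Finset.Ico J₁ J₂, f j) = 0 := by
      rw [Finset.sum_Ico_eq_sub _ h12.le, ← hP, ← hP, heq, sub_self]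
    have hsum0 : (∑ j ∈ Finset.Ico J₁ J₂, Real.sin (2 * Real.pi * (ℓ j : ℝ) / (n : ℝ))) = 0 := by
      have := congrArg Complex.im hsum
      rw [Complex.im_sum] at this
      simpa [him] using this
    have hnonneg : ∀ j ∈ Finset.Ico J₁ J₂,
        0 ≤ Real.sin (2 * Real.pi * (ℓ j : ℝ) / (n : ℝ)) := by
      intro j hj
      simp only [Finset.mem_Ico] at hj
      have hjk : ℓ j ≤ k := hℓle j (by omega)
      apply Real.sin_nonneg_of_nonneg_of_le_pi
      · positivity
      · rw [div_le_iff₀ hnR]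
        have : (ℓ j : ℝ) ≤ (k : ℝ) := by exact_mod_cast hjk
        have hnk : (2 * k : ℝ) ≤ (n : ℝ) := by exact_mod_cast hn2k
        nlinarith [Real.pi_pos]
    have hzero := (Finset.sum_eq_zero_iff_of_nonneg hnonneg).mp hsum0
    have hno : ∀ j, ¬ (J₁ ≤ j ∧ j < J₂ ∧ 1 ≤ j ∧ j < k) := by
      rintro j ⟨ha, hb, hc, hd⟩
      have hz := hzero j (Finset.mem_Ico.mpr ⟨ha, hb⟩)
      have hpos := hℓpos j hc hd
      have hlR : (0:ℝ) < (ℓ j : ℝ) := by exact_mod_cast hpos.1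
      have hsin : 0 < Real.sin (2 * Real.pi * (ℓ j : ℝ) / (n : ℝ)) := by
        apply Real.sin_pos_of_pos_of_lt_pi
        · positivity
        · rw [div_lt_iff₀ hnR]
          have : (ℓ j : ℝ) < (k : ℝ) := by exact_mod_cast hpos.2
          have hnk : (2 * k : ℝ) ≤ (n : ℝ) := by exact_mod_cast hn2k
          nlinarith [Real.pi_pos]
      linarith
    have hA := hno J₁
    have hB := hno 1
    have hcase : (J₁ = 0 ∧ J₂ = 1) ∨ (J₁ = k ∧ J₂ = k + 1) := by omega
    rcases hcase with ⟨rfl, rfl⟩ | ⟨rfl, rfl⟩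
    · rw [show Finset.Ico 0 1 = {0} from rfl, Finset.sum_singleton] at hsum
      exact Complex.exp_ne_zero _ hsum
    · rw [Finset.sum_Ico_succ_top (le_refl _), Finset.Ico_self, Finset.sum_empty, zero_add] at hsum
      exact Complex.exp_ne_zero _ hsum
  intro J₁ h1 J₂ h2 heq
  rcases lt_trichotomy J₁ J₂ with h | h | h
  · exact absurd heq (key J₁ J₂ h h2)
  · exact h
  · exact absurd heq.symm (key J₂ J₁ h h1)
end
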